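/- arXiv:2104.13331 — 4 statements merged into one kernel-verified Lean document; each statement's English description precedes it below -/
import Mathlib

section
/- Let k be an algebraically closed field, R a reduced finitely generated k-algebra, M a finitely generated R-module, and m ∈ M. Then the set D(m) = { p ∈ Spec R : the image of m under the natural map M → M ⊗_R κ(p) is nonzero }, where κ(p) denotes the residue field of the localization of R at p, is a constructible subset of the prime spectrum Spec R with its Zariski topology. -/
/-- A subset of a topological space is constructible if it is a finite union of sets of the
form `U ∩ Z` with `U` open and `Z` closed. -/
def IsConstructibleSet {X : Type*} [TopologicalSpace X] (s : Set X) : Prop :=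
  ∃ S : Finset (Set X × Set X),
    (∀ t ∈ S, IsOpen t.1 ∧ IsClosed t.2) ∧ s = ⋃ t ∈ S, t.1 ∩ t.2

/-- The residue field `κ(p)` of a prime `p`, i.e. the residue field of the localization at `p`. -/
noncomputable abbrev residueFieldAt {R : Type*} [CommRing R] (p : PrimeSpectrum R) : Type _ :=
  IsLocalRing.ResidueField (Localization.AtPrime p.asIdeal)

/-!
The fibre dimension `p ↦ dim κ(p) ⊗ M` of a finite module is upper semicontinuous on `Spec R`:
if `x₁, …, xₙ` generate the fibre at `p`, then by Nakayama the quotient `M / ⟨x₁, …, xₙ⟩`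
vanishes at `p`, hence on the open complement of its support, where the `xᵢ` still generate
every fibre. By right exactness, `κ(p) ⊗ (M / Rm) = (κ(p) ⊗ M) / κ(p)·(1 ⊗ m)`, so `D(m)` is the
locus where the fibre dimension of `M / Rm` drops below that of `M`, namely the finite union
`⋃ₙ {dim κ(p) ⊗ (M / Rm) ≤ n} ∩ {dim κ(p) ⊗ M > n}`.
-/

open TensorProduct

section BaseChange

variable {R : Type*} [CommRing R] {M : Type*} [AddCommGroup M] [Module R M]

lemma Submodule.ker_baseChange_mkQ (A : Type*) [CommRing A] [Algebra R A] (N : Submodule R M) :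
    LinearMap.ker (N.mkQ.baseChange A) = N.baseChange A := by
  apply Submodule.restrictScalars_injective R
  rw [← LinearMap.ker_restrictScalars]
  exact lTensor_mkQ A N

variable (K : Type*) [Field K] [Algebra R K]

lemma finrank_baseChange_quotient_add_finrank_baseChange [Module.Finite R M] (N : Submodule R M) :
    Module.finrank K (K ⊗[R] (M ⧸ N)) + Module.finrank K (N.baseChange K) =
      Module.finrank K (K ⊗[R] M) := by
  have hsurj := LinearMap.baseChange_surjective K N.mkQ_surjective
  rw [← (N.mkQ.baseChange K).quotKerEquivOfSurjective hsurj |>.finrank_eq,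
    Submodule.ker_baseChange_mkQ, Submodule.finrank_quotient_add_finrank]

lemma finrank_baseChange_span_range_le {ι : Type*} [Fintype ι] (v : ι → M) :
    Module.finrank K ((Submodule.span R (Set.range v)).baseChange K) ≤ Fintype.card ι := by
  rw [Submodule.baseChange_span, ← Set.range_comp]
  exact finrank_range_le_card _

end BaseChange

section FiberRank

variable {R : Type*} [CommRing R] (M : Type*) [AddCommGroup M] [Module R M]

/-- Not `Module.rankAtStalk M p`, the `finrank` of `Mₚ`, which is junk unless `Mₚ` is free. -/
noncomputable def fiberRank (p : PrimeSpectrum R) : ℕ :=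
  Module.finrank (residueFieldAt p) (residueFieldAt p ⊗[R] M)

variable {M}

lemma fiberRank_le_of_span_eq_top {ι : Type*} [Fintype ι] {v : ι → M}
    (hv : Submodule.span R (Set.range v) = ⊤) (p : PrimeSpectrum R) :
    fiberRank M p ≤ Fintype.card ι := by
  have := finrank_baseChange_span_range_le (R := R) (residueFieldAt p) v
  rwa [hv, Submodule.baseChange_top, finrank_top] at this

lemma fiberRank_eq_zero_iff [Module.Finite R M] (p : PrimeSpectrum R) :
    fiberRank M p = 0 ↔ p ∉ Module.support R M := by
  rw [Module.mem_support_iff_nontrivial_residueField_tensorProduct, not_nontrivial_iff_subsingleton]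
  exact Module.finrank_zero_iff

lemma exists_fin_fiberRank_baseChange_span_eq_top [Module.Finite R M] (p : PrimeSpectrum R) :
    ∃ v : Fin (fiberRank M p) → M,
      (Submodule.span R (Set.range v)).baseChange (residueFieldAt p) = ⊤ := by
  set κ := residueFieldAt p
  have hspan : Submodule.span κ (Set.range (TensorProduct.mk R κ M 1)) = ⊤ := by
    rw [← Set.image_univ, ← Submodule.baseChange_span, Submodule.span_univ,
      Submodule.baseChange_top]
  have hfin := Submodule.exists_fun_fin_finrank_span_eq κ (Set.range (TensorProduct.mk R κ M 1))
  rw [hspan, finrank_top, ← fiberRank.eq_1] at hfin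
  obtain ⟨f, hf, hf_span, -⟩ := hfin
  choose v hv using hf
  refine ⟨v, ?_⟩
  rw [Submodule.baseChange_span, ← Set.range_comp, ← hf_span]
  congr
  exact funext hv

lemma fiberRank_quotient_add_finrank_baseChange [Module.Finite R M] (N : Submodule R M)
    (p : PrimeSpectrum R) :
    fiberRank (M ⧸ N) p + Module.finrank (residueFieldAt p) (N.baseChange (residueFieldAt p)) =
      fiberRank M p :=
  finrank_baseChange_quotient_add_finrank_baseChange _ N

lemma isOpen_setOf_fiberRank_le [Module.Finite R M] (n : ℕ) :
    IsOpen {p : PrimeSpectrum R | fiberRank M p ≤ n} := by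
  rw [isOpen_iff_forall_mem_open]
  intro p hp
  obtain ⟨v, hv⟩ := exists_fin_fiberRank_baseChange_span_eq_top (M := M) p
  set N := Submodule.span R (Set.range v)
  refine ⟨(Module.support R (M ⧸ N))ᶜ, fun q hq ↦ ?_, ?_, ?_⟩
  · rw [Set.mem_compl_iff, ← fiberRank_eq_zero_iff] at hq
    calc fiberRank M q
        = Module.finrank (residueFieldAt q) (N.baseChange (residueFieldAt q)) := by
          rw [← fiberRank_quotient_add_finrank_baseChange N q, hq, zero_add]
      _ ≤ fiberRank M p := by
          simpa using finrank_baseChange_span_range_le (R := R) (residueFieldAt q) v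
      _ ≤ n := hp
  · rw [isOpen_compl_iff, Module.support_eq_zeroLocus]
    exact PrimeSpectrum.isClosed_zeroLocus _
  · rw [Set.mem_compl_iff, ← fiberRank_eq_zero_iff]
    have hrank := fiberRank_quotient_add_finrank_baseChange N p
    rw [hv, finrank_top] at hrank
    exact Nat.add_eq_right.mp hrank

lemma fiberRank_quotient_span_singleton_lt_iff [Module.Finite R M] (m : M) (p : PrimeSpectrum R) :
    fiberRank (M ⧸ Submodule.span R {m}) p < fiberRank M p ↔
      (1 : residueFieldAt p) ⊗ₜ[R] m ≠ 0 := by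
  have := fiberRank_quotient_add_finrank_baseChange (Submodule.span R {m}) p
  rw [Submodule.baseChange_span, Set.image_singleton] at this
  rw [← this, lt_add_iff_pos_right, Nat.pos_iff_ne_zero, ne_eq,
    Submodule.finrank_eq_zero, Submodule.span_singleton_eq_bot, TensorProduct.mk_apply]

end FiberRank

lemma isConstructibleSet_setOf_lt {X : Type*} [TopologicalSpace X] {f g : X → ℕ}
    (hf : ∀ n, IsOpen {x | f x ≤ n}) (hg : ∀ n, IsOpen {x | g x ≤ n}) {N : ℕ}
    (hfN : ∀ x, f x ≤ N) : IsConstructibleSet {x | g x < f x} := by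
  classical
  refine ⟨(Finset.range N).image fun n ↦ ({x | g x ≤ n}, {x | f x ≤ n}ᶜ), ?_, ?_⟩
  · simp only [Finset.mem_image, Finset.mem_range]
    rintro _ ⟨n, -, rfl⟩
    exact ⟨hg n, (hf n).isClosed_compl⟩
  · ext x
    simp only [Set.mem_iUnion, Finset.mem_image, Finset.mem_range, exists_prop,
      exists_exists_and_eq_and, Set.mem_inter_iff, Set.mem_ofPred, Set.mem_compl_iff, not_le]
    exact ⟨fun h ↦ ⟨g x, h.trans_le (hfN x), le_rfl, h⟩, fun ⟨n, _, hgn, hfn⟩ ↦ hgn.trans_lt hfn⟩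

open TensorProduct in
theorem stmt_2_general
    (R : Type*) [CommRing R]
    (M : Type*) [AddCommGroup M] [Module R M] [Module.Finite R M] (m : M) :
    IsConstructibleSet { p : PrimeSpectrum R |
      (m ⊗ₜ[R] (1 : residueFieldAt p) : M ⊗[R] residueFieldAt p) ≠ 0 } := by
  obtain ⟨n, v, hv⟩ := Module.Finite.exists_fin (R := R) (M := M)
  convert isConstructibleSet_setOf_lt isOpen_setOf_fiberRank_le
    (isOpen_setOf_fiberRank_le (M := M ⧸ Submodule.span R {m})) (fiberRank_le_of_span_eq_top hv)
    using 1
  ext p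
  rw [Set.mem_ofPred, Set.mem_ofPred, fiberRank_quotient_span_singleton_lt_iff,
    ← (TensorProduct.comm R M (residueFieldAt p)).map_ne_zero_iff, comm_tmul]

open TensorProduct in
/-- Let `k` be an algebraically closed field, `R` a reduced finitely generated `k`-algebra,
`M` a finitely generated `R`-module and `m ∈ M`. Then the nonvanishing locus
`D(m) = { p ∈ Spec R | the image of m in M ⊗_R κ(p) is nonzero }` is constructible. -/
theorem stmt_2 (k : Type*) [Field k] [IsAlgClosed k]
    (R : Type*) [CommRing R] [IsReduced R] [Algebra k R] [Algebra.FiniteType k R]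
    (M : Type*) [AddCommGroup M] [Module R M] [Module.Finite R M] (m : M) :
    IsConstructibleSet { p : PrimeSpectrum R |
      (m ⊗ₜ[R] (1 : residueFieldAt p) : M ⊗[R] residueFieldAt p) ≠ 0 } :=
  stmt_2_general R M m
end

section
/- Let k be a field, R a finitely generated k-algebra which is an integral domain, M a finitely generated torsion-free R-module, and m ∈ M a nonzero element. Then the set D(m) = { p ∈ Spec R : the image of m under the natural map M → M ⊗_R κ(p) is nonzero } contains a nonempty open subset of Spec R; in particular, since Spec R is irreducible, D(m) is dense in Spec R. -/
open scoped nonZeroDivisors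

section Functional

variable {R : Type*} [CommRing R] {M : Type*} [AddCommGroup M] [Module R M]

theorem LinearMap.exists_comp_eq_of_range_le_range {N P : Type*} [AddCommGroup N] [Module R N]
    [AddCommGroup P] [Module R P] {f : N →ₗ[R] P} (hf : Function.Injective f) (g : M →ₗ[R] P)
    (h : LinearMap.range g ≤ LinearMap.range f) : ∃ φ : M →ₗ[R] N, f ∘ₗ φ = g :=
  ⟨(LinearEquiv.ofInjective f hf).symm.toLinearMap ∘ₗ
      g.codRestrict _ fun x ↦ h (LinearMap.mem_range_self g x), by
    ext x; simp⟩

theorem Module.Finite.exists_smul_range_le_one (S : Submonoid R) {K : Type*} [CommRing K]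
    [Algebra R K] [IsLocalization S K] [Module.Finite R M] (g : M →ₗ[R] K) :
    ∃ s ∈ S, LinearMap.range (s • g) ≤ 1 := by
  obtain ⟨s, hs, hint⟩ := FractionalIdeal.isFractional_of_fg (S := S) (Submodule.fg_range g)
  refine ⟨s, hs, ?_⟩
  rintro _ ⟨x, rfl⟩
  exact Submodule.mem_one.mpr (hint _ (LinearMap.mem_range_self g x))

variable [IsDomain R] [NoZeroSMulDivisors R M]

variable (R) in
theorem exists_linearMap_fractionRing_apply_ne_zero {m : M} (hm : m ≠ 0) :
    ∃ g : M →ₗ[R] FractionRing R, g m ≠ 0 := by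
  have hι : LocalizedModule.mkLinearMap R⁰ M m ≠ 0 := by
    rw [Ne, IsLocalizedModule.eq_zero_iff R⁰]
    rintro ⟨s, hs⟩
    exact smul_ne_zero (nonZeroDivisors.coe_ne_zero s) hm hs
  obtain ⟨ψ, hψ⟩ : ∃ ψ : Module.Dual (FractionRing R) (LocalizedModule R⁰ M),
      ψ (LocalizedModule.mkLinearMap R⁰ M m) ≠ 0 := by
    by_contra! h
    exact hι ((Module.forall_dual_apply_eq_zero_iff _ _).mp h)
  exact ⟨ψ.restrictScalars R ∘ₗ LocalizedModule.mkLinearMap R⁰ M, hψ⟩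

variable (R) in
theorem Module.Finite.exists_dual_apply_ne_zero [Module.Finite R M] {m : M} (hm : m ≠ 0) :
    ∃ φ : Module.Dual R M, φ m ≠ 0 := by
  obtain ⟨g, hg⟩ := exists_linearMap_fractionRing_apply_ne_zero R hm
  obtain ⟨s, hs, hrange⟩ := Module.Finite.exists_smul_range_le_one R⁰ g
  rw [Submodule.one_eq_range] at hrange
  obtain ⟨φ, hφ⟩ := LinearMap.exists_comp_eq_of_range_le_range
    (IsFractionRing.injective R (FractionRing R)) _ hrange
  refine ⟨φ, fun hφm ↦ ?_⟩
  have hsg : s • g m = 0 := by simpa [hφm] using (LinearMap.congr_fun hφ m).symm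
  exact smul_ne_zero (nonZeroDivisors.ne_zero hs) hg hsg

end Functional

open TensorProduct in
theorem TensorProduct.tmul_one_ne_zero_of_algebraMap_dual_apply_ne_zero {R : Type*} [CommRing R]
    {M : Type*} [AddCommGroup M] [Module R M] {A : Type*} [CommRing A] [Algebra R A]
    (φ : Module.Dual R M) {m : M} (h : algebraMap R A (φ m) ≠ 0) : m ⊗ₜ[R] (1 : A) ≠ 0 := by
  intro hm
  have := congrArg ((TensorProduct.lid R A).toLinearMap ∘ₗ φ.rTensor A) hm
  exact h (by simpa [Algebra.algebraMap_eq_smul_one] using this)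

open TensorProduct in
theorem stmt_3_general
    (R : Type*) [CommRing R] [IsDomain R]
    (M : Type*) [AddCommGroup M] [Module R M] [Module.Finite R M] [NoZeroSMulDivisors R M]
    (m : M) (hm : m ≠ 0) :
    (∃ U : Set (PrimeSpectrum R), IsOpen U ∧ U.Nonempty ∧
      U ⊆ { p : PrimeSpectrum R |
        (m ⊗ₜ[R] (1 : residueFieldAt p) : M ⊗[R] residueFieldAt p) ≠ 0 }) ∧
    Dense { p : PrimeSpectrum R |
      (m ⊗ₜ[R] (1 : residueFieldAt p) : M ⊗[R] residueFieldAt p) ≠ 0 } := by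
  obtain ⟨φ, hφ⟩ := Module.Finite.exists_dual_apply_ne_zero R hm
  set U : Set (PrimeSpectrum R) := ↑(PrimeSpectrum.basicOpen (φ m))
  have hU : IsOpen U := (PrimeSpectrum.basicOpen (φ m)).isOpen
  have hU_nonempty : U.Nonempty := ⟨⟨⊥, Ideal.isPrime_bot⟩, by simpa [U] using hφ⟩
  have hU_sub : U ⊆ { p | (m ⊗ₜ[R] (1 : residueFieldAt p) : M ⊗[R] residueFieldAt p) ≠ 0 } :=
    fun p hp ↦ tmul_one_ne_zero_of_algebraMap_dual_apply_ne_zero φ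
      (Ideal.algebraMap_residueField_eq_zero.not.mpr hp)
  exact ⟨⟨U, hU, hU_nonempty, hU_sub⟩, (hU.dense hU_nonempty).mono hU_sub⟩

open TensorProduct in
/-- Let `k` be a field, `R` a finitely generated `k`-algebra which is a domain, `M` a finitely
generated torsion-free `R`-module, and `m ∈ M` nonzero. Then the nonvanishing locus
`D(m) = { p ∈ Spec R | the image of m in M ⊗_R κ(p) is nonzero }` contains a nonempty open
subset of `Spec R`, and in particular is dense. -/
theorem stmt_3 (k : Type*) [Field k]
    (R : Type*) [CommRing R] [IsDomain R] [Algebra k R] [Algebra.FiniteType k R]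
    (M : Type*) [AddCommGroup M] [Module R M] [Module.Finite R M] [NoZeroSMulDivisors R M]
    (m : M) (hm : m ≠ 0) :
    (∃ U : Set (PrimeSpectrum R), IsOpen U ∧ U.Nonempty ∧
      U ⊆ { p : PrimeSpectrum R |
        (m ⊗ₜ[R] (1 : residueFieldAt p) : M ⊗[R] residueFieldAt p) ≠ 0 }) ∧
    Dense { p : PrimeSpectrum R |
      (m ⊗ₜ[R] (1 : residueFieldAt p) : M ⊗[R] residueFieldAt p) ≠ 0 } :=
  stmt_3_general R M m hm
end

section
/- Let X be a topological space which is sober, Noetherian, irreducible, and of topological Krull dimension at most 1. Then every constructible subset of X is either open or closed; moreover, any such constructible subset which is closed and proper is a finite set of closed points. -/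
/-!
In an irreducible space of dimension at most one, a proper irreducible closed set `Z` cannot
contain a smaller irreducible closed set, since that would give a chain of length two below `X`.
So `Z` is the closure of each of its points, and in a T₀ space it is a single closed point.
By noetherianity every proper closed set is a finite union of irreducible closed sets, hence a
finite set of closed points, so all of its subsets are closed. Consequently an open set `U` and a
closed set `Z` have `U ∩ Z` open or closed, and `U ∪ Z` is closed if `U = ∅` and open otherwise,
its complement lying in the proper closed set `Uᶜ`. An induction on the pieces of a constructible
set finishes the proof.
-/

open Set TopologicalSpace

section

variable {X : Type*} [TopologicalSpace X]

lemma IrreducibleCloseds.isMin_of_coe_ne_univ [IrreducibleSpace X]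
    (hdim : topologicalKrullDim X ≤ 1) (Z : IrreducibleCloseds X) (hZ : (Z : Set X) ≠ univ) :
    IsMin Z := by
  refine ((Order.krullDim_le_one_iff.mp hdim) Z).resolve_right fun hmax ↦ hZ ?_
  let top : IrreducibleCloseds X := ⟨univ, IrreducibleSpace.isIrreducible_univ X, isClosed_univ⟩
  exact congrArg SetLike.coe (hmax.eq_of_le (show Z ≤ top from subset_univ _))

lemma IsIrreducible.exists_eq_singleton_of_ne_univ [T0Space X] [IrreducibleSpace X]
    (hdim : topologicalKrullDim X ≤ 1) {Z : Set X} (hirr : IsIrreducible Z) (hcl : IsClosed Z)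
    (hne : Z ≠ univ) : ∃ x, Z = {x} := by
  have closure_eq : ∀ y ∈ Z, closure {y} = Z := fun y hy ↦ by
    let Zᵢ : IrreducibleCloseds X := ⟨Z, hirr, hcl⟩
    let Yᵢ : IrreducibleCloseds X := ⟨closure {y}, isIrreducible_singleton.closure, isClosed_closure⟩
    have hle : Yᵢ ≤ Zᵢ := hcl.closure_subset_iff.mpr (singleton_subset_iff.mpr hy)
    exact le_antisymm hle (IrreducibleCloseds.isMin_of_coe_ne_univ hdim Zᵢ hne hle)
  obtain ⟨x, hx⟩ := hirr.nonempty
  refine ⟨x, eq_singleton_iff_unique_mem.mpr ⟨hx, fun y hy ↦ ?_⟩⟩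
  exact (inseparable_iff_closure_eq.mpr ((closure_eq y hy).trans (closure_eq x hx).symm)).eq

lemma isClosed_singleton_of_closure_ne_univ [T0Space X] [IrreducibleSpace X]
    (hdim : topologicalKrullDim X ≤ 1) {x : X} (hx : closure {x} ≠ univ) :
    IsClosed ({x} : Set X) := by
  obtain ⟨y, hy⟩ := isIrreducible_singleton.closure.exists_eq_singleton_of_ne_univ hdim
    isClosed_closure hx
  have hxy : x = y := mem_singleton_iff.mp (hy ▸ subset_closure (mem_singleton x))
  exact hxy ▸ hy ▸ isClosed_closure

lemma IsClosed.isClosed_singleton_of_mem_of_ne_univ [T0Space X] [IrreducibleSpace X]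
    (hdim : topologicalKrullDim X ≤ 1) {Z : Set X} (hZ : IsClosed Z) (hne : Z ≠ univ) {x : X}
    (hx : x ∈ Z) : IsClosed ({x} : Set X) :=
  isClosed_singleton_of_closure_ne_univ hdim fun h ↦
    hne (univ_subset_iff.mp (h ▸ hZ.closure_subset_iff.mpr (singleton_subset_iff.mpr hx)))

lemma IsClosed.finite_of_ne_univ [T0Space X] [NoetherianSpace X] [IrreducibleSpace X]
    (hdim : topologicalKrullDim X ≤ 1) {Z : Set X} (hZ : IsClosed Z) (hne : Z ≠ univ) :
    Z.Finite := by
  obtain ⟨S, hSfin, hScl, hSirr, rfl⟩ := NoetherianSpace.exists_finite_set_isClosed_irreducible hZ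
  refine hSfin.sUnion fun t ht ↦ ?_
  have htne : t ≠ univ := fun h ↦ hne (univ_subset_iff.mp (h ▸ subset_sUnion_of_mem ht))
  obtain ⟨x, rfl⟩ := (hSirr t ht).exists_eq_singleton_of_ne_univ hdim (hScl t ht) htne
  exact finite_singleton x

lemma IsClosed.isClosed_of_subset_of_ne_univ [T0Space X] [NoetherianSpace X] [IrreducibleSpace X]
    (hdim : topologicalKrullDim X ≤ 1) {Z s : Set X} (hZ : IsClosed Z) (hne : Z ≠ univ)
    (hs : s ⊆ Z) : IsClosed s := by
  rw [← biUnion_of_singleton s]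
  exact ((hZ.finite_of_ne_univ hdim hne).subset hs).isClosed_biUnion fun x hx ↦
    hZ.isClosed_singleton_of_mem_of_ne_univ hdim hne (hs hx)

section OpenOrClosed

variable [T0Space X] [NoetherianSpace X] [IrreducibleSpace X]

lemma isOpen_or_isClosed_inter (hdim : topologicalKrullDim X ≤ 1) {U Z : Set X}
    (hU : IsOpen U) (hZ : IsClosed Z) : IsOpen (U ∩ Z) ∨ IsClosed (U ∩ Z) := by
  by_cases hne : Z = univ
  · exact .inl (by rwa [hne, inter_univ])
  · exact .inr (hZ.isClosed_of_subset_of_ne_univ hdim hne inter_subset_right)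

lemma IsOpen.isOpen_of_superset (hdim : topologicalKrullDim X ≤ 1) {U s : Set X}
    (hU : IsOpen U) (hUne : U.Nonempty) (hUs : U ⊆ s) : IsOpen s := by
  have hne : Uᶜ ≠ univ := fun h ↦ hUne.ne_empty (compl_univ_iff.mp h)
  rw [← isClosed_compl_iff]
  exact hU.isClosed_compl.isClosed_of_subset_of_ne_univ hdim hne (compl_subset_compl.mpr hUs)

lemma isOpen_or_isClosed_union (hdim : topologicalKrullDim X ≤ 1) {s t : Set X}
    (hs : IsOpen s ∨ IsClosed s) (ht : IsOpen t ∨ IsClosed t) :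
    IsOpen (s ∪ t) ∨ IsClosed (s ∪ t) := by
  have open_union_closed : ∀ {U Z : Set X}, IsOpen U → IsClosed Z →
      IsOpen (U ∪ Z) ∨ IsClosed (U ∪ Z) := fun {U Z} hU hZ ↦ by
    rcases U.eq_empty_or_nonempty with rfl | hUne
    · exact .inr (by rwa [empty_union])
    · exact .inl (hU.isOpen_of_superset hdim hUne subset_union_left)
  rcases hs with hs | hs <;> rcases ht with ht | ht
  · exact .inl (hs.union ht)
  · exact open_union_closed hs ht
  · exact union_comm s t ▸ open_union_closed ht hs
  · exact .inr (hs.union ht)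

lemma IsConstructibleSet.isOpen_or_isClosed (hdim : topologicalKrullDim X ≤ 1) {C : Set X}
    (hC : IsConstructibleSet C) : IsOpen C ∨ IsClosed C := by
  classical
  obtain ⟨S, hS, rfl⟩ := hC
  induction S using Finset.induction_on with
  | empty => simp
  | insert p S _ ih =>
    rw [Finset.set_biUnion_insert]
    have hp := hS p (Finset.mem_insert_self p S)
    exact isOpen_or_isClosed_union hdim (isOpen_or_isClosed_inter hdim hp.1 hp.2)
      (ih fun t ht ↦ hS t (Finset.mem_insert_of_mem ht))

end OpenOrClosed

end

theorem stmt_4_general (X : Type*) [TopologicalSpace X] [T0Space X]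
    [TopologicalSpace.NoetherianSpace X] [IrreducibleSpace X]
    (hdim : topologicalKrullDim X ≤ 1)
    (C : Set X) (hC : IsConstructibleSet C) :
    (IsOpen C ∨ IsClosed C) ∧
      (IsClosed C → C ≠ Set.univ → C.Finite ∧ ∀ x ∈ C, IsClosed ({x} : Set X)) :=
  ⟨hC.isOpen_or_isClosed hdim, fun hcl hne ↦
    ⟨hcl.finite_of_ne_univ hdim hne, fun _ ↦ hcl.isClosed_singleton_of_mem_of_ne_univ hdim hne⟩⟩

/-- In a sober, Noetherian, irreducible topological space of topological Krull dimension at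
most one, every constructible subset is open or closed; moreover any constructible subset that
is closed and proper is a finite set of closed points. -/
theorem stmt_4 (X : Type*) [TopologicalSpace X] [QuasiSober X] [T0Space X]
    [TopologicalSpace.NoetherianSpace X] [IrreducibleSpace X]
    (hdim : topologicalKrullDim X ≤ 1)
    (C : Set X) (hC : IsConstructibleSet C) :
    (IsOpen C ∨ IsClosed C) ∧
      (IsClosed C → C ≠ Set.univ → C.Finite ∧ ∀ x ∈ C, IsClosed ({x} : Set X)) :=
  stmt_4_general X hdim C hC
end

section
/- Let k be a field, R a finitely generated k-algebra which is an integral domain of Krull dimension 1, M a finitely generated torsion-free R-module, and m ∈ M. Then the set D(m) = { p ∈ Spec R : the image of m under the natural map M → M ⊗_R κ(p) is nonzero } is an open subset of the prime spectrum Spec R with its Zariski topology. -/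
open nonZeroDivisors

theorem IsFractionRing.exists_linearMap_algebraMap_comp_eq_smul {R K M : Type*} [CommRing R]
    [CommRing K] [Algebra R K] [IsFractionRing R K] [AddCommGroup M] [Module R M]
    [Module.Finite R M] (g : M →ₗ[R] K) :
    ∃ b ∈ R⁰, ∃ ψ : M →ₗ[R] R, Algebra.linearMap R K ∘ₗ ψ = b • g := by
  obtain ⟨b, hb, hint⟩ :=
    FractionalIdeal.isFractional_of_fg (S := R⁰) (Module.Finite.fg_top.map g)
  have hmem : ∀ x, (b • g) x ∈ LinearMap.range (Algebra.linearMap R K) := fun x ↦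
    hint _ ⟨x, trivial, rfl⟩
  let e := LinearEquiv.ofInjective (Algebra.linearMap R K) (IsFractionRing.injective R K)
  refine ⟨b, hb, e.symm.toLinearMap ∘ₗ (b • g).codRestrict _ hmem, ?_⟩
  ext x
  exact congrArg Subtype.val (e.apply_symm_apply ⟨_, hmem x⟩)

theorem Module.exists_linearMap_apply_ne_zero {R M : Type*} [CommRing R] [IsDomain R]
    [AddCommGroup M] [Module R M] [Module.Finite R M] [Module.IsTorsionFree R M] {m : M}
    (hm : m ≠ 0) : ∃ φ : M →ₗ[R] R, φ m ≠ 0 := by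
  let K := FractionRing R
  let ℓ := LocalizedModule.mkLinearMap R⁰ M
  have hℓ : ℓ m ≠ 0 := by
    rw [Ne, IsLocalizedModule.eq_zero_iff R⁰ ℓ]
    rintro ⟨s, hs⟩
    exact hm ((smul_eq_zero_iff_right (nonZeroDivisors.coe_ne_zero s)).mp hs)
  obtain ⟨χ, hχ⟩ : ∃ χ : Module.Dual K (LocalizedModule R⁰ M), χ (ℓ m) ≠ 0 := by
    by_contra! h
    exact hℓ ((Module.forall_dual_apply_eq_zero_iff K _).mp h)
  obtain ⟨b, hb, φ, hφ⟩ :=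
    IsFractionRing.exists_linearMap_algebraMap_comp_eq_smul ((χ.restrictScalars R) ∘ₗ ℓ)
  refine ⟨φ, fun h0 ↦ hχ ?_⟩
  have hφm : algebraMap R K (φ m) = b • χ (ℓ m) := LinearMap.congr_fun hφ m
  rw [h0, map_zero] at hφm
  exact (smul_eq_zero_iff_right (nonZeroDivisors.ne_zero hb)).mp hφm.symm

theorem isArtinianRing_quotient_span_singleton {R : Type*} [CommRing R] [IsNoetherianRing R]
    [Ring.KrullDimLE 1 R] {f : R} (hf : f ∈ R⁰) : IsArtinianRing (R ⧸ Ideal.span {f}) :=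
  isArtinian_of_tower R
    (isFiniteLength_iff_isNoetherian_isArtinian.mp (isFiniteLength_quotient_span_singleton R hf)).2

namespace PrimeSpectrum

theorem isClosed_of_subset_zeroLocus_singleton {R : Type*} [CommRing R] [IsNoetherianRing R]
    [Ring.KrullDimLE 1 R] {f : R} (hf : f ∈ R⁰) {s : Set (PrimeSpectrum R)}
    (hs : s ⊆ zeroLocus {f}) : IsClosed s := by
  have := isArtinianRing_quotient_span_singleton hf
  have hπ := Ideal.Quotient.mk_surjective (I := Ideal.span {f})
  have hrange : Set.range (comap (Ideal.Quotient.mk (Ideal.span {f}))) = zeroLocus {f} := by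
    rw [range_comap_of_surjective _ _ hπ, Ideal.mk_ker, zeroLocus_span]
  rw [← hrange] at hs
  rw [← Set.image_preimage_eq_of_subset hs]
  exact (isClosedEmbedding_comap_of_surjective _ _ hπ).isClosedMap _ (isClosed_discrete _)

end PrimeSpectrum

namespace TensorProduct

theorem tmul_one_ne_zero_of_algebraMap_ne_zero {R M A : Type*} [CommRing R]
    [AddCommGroup M] [Module R M] [CommRing A] [Algebra R A] {m : M} (φ : M →ₗ[R] R)
    (h : algebraMap R A (φ m) ≠ 0) : m ⊗ₜ[R] (1 : A) ≠ 0 := by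
  intro h0
  have hφm :
      TensorProduct.lid R A (φ.rTensor A (m ⊗ₜ[R] (1 : A))) = algebraMap R A (φ m) := by
    simp [Algebra.algebraMap_eq_smul_one]
  rw [h0, map_zero, map_zero] at hφm
  exact h hφm.symm

end TensorProduct

open TensorProduct in
/-- Let `k` be a field, `R` a finitely generated `k`-algebra which is a domain of Krull
dimension one, `M` a finitely generated torsion-free `R`-module, and `m ∈ M`. Then the
nonvanishing locus `D(m) = { p ∈ Spec R | the image of m in M ⊗_R κ(p) is nonzero }` is an
open subset of `Spec R`. -/
theorem stmt_5 (k : Type*) [Field k]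
    (R : Type*) [CommRing R] [IsDomain R] [Algebra k R] [Algebra.FiniteType k R]
    (hdim : ringKrullDim R = 1)
    (M : Type*) [AddCommGroup M] [Module R M] [Module.Finite R M] [NoZeroSMulDivisors R M]
    (m : M) :
    IsOpen { p : PrimeSpectrum R |
      (m ⊗ₜ[R] (1 : residueFieldAt p) : M ⊗[R] residueFieldAt p) ≠ 0 } := by
  have : IsNoetherianRing R := Algebra.FiniteType.isNoetherianRing k R
  have : Ring.KrullDimLE 1 R := Ring.krullDimLE_iff.mpr hdim.le
  rcases eq_or_ne m 0 with rfl | hm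
  · simp
  obtain ⟨φ, hφ⟩ := Module.exists_linearMap_apply_ne_zero (R := R) hm
  rw [← isClosed_compl_iff]
  refine PrimeSpectrum.isClosed_of_subset_zeroLocus_singleton
    (mem_nonZeroDivisors_of_ne_zero hφ) fun p hp ↦ ?_
  rw [PrimeSpectrum.mem_zeroLocus, Set.singleton_subset_iff]
  by_contra hφp
  exact hp (tmul_one_ne_zero_of_algebraMap_ne_zero φ
    (Ideal.algebraMap_residueField_eq_zero.not.mpr hφp))
end
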